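/- Let λ > 0, β > 0 with β ≠ 2λ, σ ∈ ℝ, and let j ≥ 1 be an integer. Then (σ²/(2β)) ∫_0^1 F_{j,0}(e^{2πit}) dt = σ² λ^{j−1} / ( 2β (λ+β)^{j+1} ). -/

import Mathlib

/-!
The integral over `t` is the average of `F_{j,0}` over the unit circle. There the factor
`λ − β − λz` cancels (it does not vanish on the circle because `β ≠ 2λ`), and partial fractions
give `F_{j,0}(z) = z / (z − d) · h(z)` with `d = λ/(λ+β)` inside the unit disc and `h` holomorphic
on the closed disc, the remaining pole `(λ+β)/λ` lying outside. By the generalized mean value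
property (Cauchy's formula) the average is `h(d) = d^(j−1) / (λ+β)²`.
-/

open Complex Finset intervalIntegral

noncomputable section

/-- F_{j,τ}(z) = (z^j/(λ−β−λz)) (e^{−βτ}(1−z)²/(λ−(λ+β)z) − 2β e^{λ(z−1)τ}/(λ(λ+β−λz))). -/
def Ffun (lam beta : ℝ) (j : ℕ) (τ : ℝ) (z : ℂ) : ℂ :=
  (z ^ j / (lam - beta - lam * z)) *
    (Complex.exp (-(beta : ℂ) * τ) * (1 - z) ^ 2 / (lam - (lam + beta) * z) -
      2 * beta * Complex.exp ((lam : ℂ) * (z - 1) * τ) / (lam * (lam + beta - lam * z)))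

open Metric Real

theorem intervalIntegral_exp_two_pi_I_eq_circleAverage {E : Type*} [NormedAddCommGroup E]
    [NormedSpace ℝ E] (f : ℂ → E) :
    ∫ t in (0 : ℝ)..1, f (exp (2 * π * I * t)) = circleAverage f 0 1 := by
  have hmap (t : ℝ) : exp (2 * π * I * t) = circleMap 0 1 (2 * π * t) := by
    simp only [circleMap, ofReal_mul, ofReal_ofNat, ofReal_one, one_mul, zero_add]
    ring_nf
  simp_rw [hmap]
  rw [intervalIntegral.integral_comp_mul_left (fun θ ↦ f (circleMap 0 1 θ)) (by positivity),
    circleAverage_def, mul_zero, mul_one]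

theorem sub_mul_ne_zero_of_norm_ne {𝕜 : Type*} [NormedDivisionRing 𝕜] {a b z : 𝕜}
    (hab : ‖a‖ ≠ ‖b‖) (hz : ‖z‖ = 1) : a - b * z ≠ 0 := by
  intro h
  apply hab
  rw [sub_eq_zero.mp h, norm_mul, hz, mul_one]

def FfunRegularFactor (lam beta : ℝ) (k : ℕ) (z : ℂ) : ℂ :=
  z ^ k * ((z - lam / (lam + beta)) * (1 / (lam * (lam + beta)) + 1 / (lam * (lam + beta - lam * z)))
    + 1 / (lam + beta) ^ 2)

theorem Ffun_zero_succ_eq {lam beta : ℝ} (k : ℕ) {z : ℂ} (hlam : (lam : ℂ) ≠ 0)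
    (hlb : (lam : ℂ) + beta ≠ 0) (hA : (lam : ℂ) - beta - lam * z ≠ 0)
    (hB : (lam : ℂ) - (lam + beta) * z ≠ 0) (hC : (lam : ℂ) + beta - lam * z ≠ 0) :
    Ffun lam beta (k + 1) 0 z = z / (z - lam / (lam + beta)) * FfunRegularFactor lam beta k z := by
  have hd : z - lam / (lam + beta) = -((lam : ℂ) - (lam + beta) * z) / (lam + beta) := by
    field_simp; ring
  simp only [Ffun, FfunRegularFactor, ofReal_zero, mul_zero, Complex.exp_zero, one_mul, hd]
  -- an atom, so that `field_simp` recognises this denominator as nonzero after normalizing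
  generalize hBdef : (lam : ℂ) - (lam + beta) * z = B at *
  field_simp
  subst hBdef
  ring

theorem Ffun_zero_succ_eqOn_sphere {lam beta : ℝ} (hlam : 0 < lam) (hbeta : 0 < beta)
    (hne : beta ≠ 2 * lam) (k : ℕ) :
    Set.EqOn (Ffun lam beta (k + 1) 0)
      (fun z ↦ (z / (z - lam / (lam + beta))) • FfunRegularFactor lam beta k z) (sphere 0 1) := by
  intro z hz
  have hz : ‖z‖ = 1 := mem_sphere_zero_iff_norm.mp hz
  have hlb : 0 < lam + beta := by linarith
  have hAn : ‖((lam - beta : ℝ) : ℂ)‖ ≠ ‖(lam : ℂ)‖ := by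
    rw [norm_real, norm_real, Real.norm_eq_abs, Real.norm_of_nonneg hlam.le]
    intro h
    have : (lam - beta) ^ 2 = lam ^ 2 := by rw [← sq_abs, h]
    have : beta * (beta - 2 * lam) = 0 := by linear_combination this
    rcases mul_eq_zero.mp this with h | h <;> [linarith; exact hne (by linarith)]
  have hBn : ‖(lam : ℂ)‖ ≠ ‖((lam + beta : ℝ) : ℂ)‖ := by
    rw [norm_real, norm_real, Real.norm_of_nonneg hlam.le, Real.norm_of_nonneg hlb.le]
    linarith
  have hA := sub_mul_ne_zero_of_norm_ne hAn hz
  have hB := sub_mul_ne_zero_of_norm_ne hBn hz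
  have hC := sub_mul_ne_zero_of_norm_ne hBn.symm hz
  push_cast at hA hB hC
  exact Ffun_zero_succ_eq k (by exact_mod_cast hlam.ne') (by exact_mod_cast hlb.ne') hA hB hC

theorem differentiableOn_FfunRegularFactor {lam beta : ℝ} (hlam : 0 < lam) (hbeta : 0 < beta)
    (k : ℕ) : DifferentiableOn ℂ (FfunRegularFactor lam beta k) (closedBall 0 1) := by
  intro z hz
  have hC : (lam : ℂ) * (lam + beta - lam * z) ≠ 0 := by
    refine mul_ne_zero (by exact_mod_cast hlam.ne') fun h ↦ ?_
    have : ‖(lam : ℂ) + beta‖ ≤ ‖(lam : ℂ)‖ := by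
      rw [sub_eq_zero.mp h, norm_mul]
      exact mul_le_of_le_one_right (norm_nonneg _) (mem_closedBall_zero_iff.mp hz)
    rw [← ofReal_add, norm_real, norm_real, Real.norm_of_nonneg (by positivity),
      Real.norm_of_nonneg hlam.le] at this
    linarith
  unfold FfunRegularFactor
  fun_prop (disch := assumption)

/-- for β ≠ 2λ and j ≥ 1,
(σ²/(2β)) ∫₀¹ F_{j,0}(e^{2πit}) dt = σ² λ^{j−1} / (2β(λ+β)^{j+1}). -/
theorem stmt13 (lam beta σ : ℝ) (hlam : 0 < lam) (hbeta : 0 < beta) (hne : beta ≠ 2 * lam)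
    (j : ℕ) (hj : 1 ≤ j) :
    ((σ : ℂ) ^ 2 / (2 * beta)) *
        ∫ t in (0 : ℝ)..1, Ffun lam beta j 0 (Complex.exp (2 * Real.pi * Complex.I * t)) =
      ((σ ^ 2 * lam ^ (j - 1) / (2 * beta * (lam + beta) ^ (j + 1)) : ℝ) : ℂ) := by
  obtain ⟨k, rfl⟩ : ∃ k, j = k + 1 := ⟨j - 1, by omega⟩
  have hlb : 0 < lam + beta := by linarith
  have hpole : (lam : ℂ) / (lam + beta) ∈ ball 0 |1| := by
    rw [abs_one, mem_ball_zero_iff, ← ofReal_add, ← ofReal_div, norm_real,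
      Real.norm_of_nonneg (by positivity), div_lt_one hlb]
    linarith
  have hreg : DiffContOnCl ℂ (FfunRegularFactor lam beta k) (ball 0 |1|) := by
    rw [abs_one]
    exact (differentiableOn_FfunRegularFactor hlam hbeta k).diffContOnCl_ball subset_rfl
  have hmean := hreg.circleAverage_smul_div hpole
  simp only [sub_zero] at hmean
  have hF := Ffun_zero_succ_eqOn_sphere hlam hbeta hne k
  rw [intervalIntegral_exp_two_pi_I_eq_circleAverage,
    circleAverage_congr_sphere (by rwa [abs_one]), hmean]
  simp only [FfunRegularFactor, sub_self, zero_mul, zero_add, Nat.add_sub_cancel, div_pow]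
  have hlbC : (lam : ℂ) + beta ≠ 0 := by exact_mod_cast hlb.ne'
  have hbC : (beta : ℂ) ≠ 0 := by exact_mod_cast hbeta.ne'
  push_cast
  field_simp
  ring
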